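/- Let A be an invertible n×n real matrix (n ≥ 2) with columns X_k = A e_k and X_k* = (A⁻¹)* e_k, let P₁ be the orthogonal projection onto H₁ = span(X_i : i ≥ 2), and set Y_k* = P₁X_k* for k = 2,…,n. Then for each k ∈ {2,…,n}, ‖Y_k*‖₂ = 1/dist(X_k, H_{1,k}), where H_{1,k} = span(X_i : i ∉ {1,k}). -/

import Mathlib

/-!
Write `v = x - P_K x` for the component of `x` orthogonal to `K`, so that `‖v‖ = dist(x, K)`.
A vector `y` of `K ⊔ ℝ x` orthogonal to `K` equals `P_{Kᗮ} y`, hence is a multiple `t v`, and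
`⟪y, x⟫ = 1` forces `t ‖v‖² = 1`, i.e. `‖y‖ = 1 / ‖v‖`. For `K = H_{1,k}` and `x = X_k` the
vector `Y_k* = P₁ X_k*` qualifies, because `P₁` does not change inner products with the `X_i`,
`i ≥ 2`, and `(X_j*, X_i)` is biorthogonal since `A⁻¹ A = 1`.
-/

open scoped RealInnerProductSpace

namespace Submodule

variable {E : Type*} [NormedAddCommGroup E] [InnerProductSpace ℝ E]

theorem infDist_eq_norm_sub_starProjection (K : Submodule ℝ E) [K.HasOrthogonalProjection]
    (x : E) : Metric.infDist x K = ‖x - K.starProjection x‖ := by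
  rw [Metric.infDist_eq_iInf, starProjection_minimal]
  simp only [dist_eq_norm]
  rfl

theorem mem_orthogonal_span_of_forall_inner_eq_zero {S : Set E} {y : E}
    (h : ∀ u ∈ S, ⟪u, y⟫ = 0) : y ∈ (span ℝ S)ᗮ := by
  rw [← span_singleton_le_iff_mem, ← isOrtho_iff_le, isOrtho_span]
  rintro _ rfl u hu
  rw [real_inner_comm]
  exact h u hu

theorem exists_eq_smul_sub_starProjection {K : Submodule ℝ E} [K.HasOrthogonalProjection]
    {x y : E} (hy : y ∈ K ⊔ ℝ ∙ x) (hyK : y ∈ Kᗮ) :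
    ∃ t : ℝ, y = t • (x - K.starProjection x) := by
  obtain ⟨u, hu, w, hw, rfl⟩ := mem_sup.mp hy
  obtain ⟨t, rfl⟩ := mem_span_singleton.mp hw
  refine ⟨t, ?_⟩
  have hproj : u + t • K.starProjection x = 0 := by
    rw [← (starProjection_apply_eq_zero_iff K).mpr hyK, map_add, map_smul,
      starProjection_eq_self_iff.mpr hu]
  linear_combination (norm := module) hproj

theorem norm_eq_one_div_infDist_of_inner_eq_one {K : Submodule ℝ E} [K.HasOrthogonalProjection]
    {x y : E} (hy : y ∈ K ⊔ ℝ ∙ x) (hyK : y ∈ Kᗮ) (hyx : ⟪y, x⟫ = 1) :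
    ‖y‖ = 1 / Metric.infDist x K := by
  set v := x - K.starProjection x
  obtain ⟨t, rfl⟩ := exists_eq_smul_sub_starProjection hy hyK
  have hyv : ⟪t • v, v⟫ = 1 := by
    rw [inner_sub_right, hyx, inner_left_of_mem_orthogonal (K.starProjection_apply_mem x) hyK,
      sub_zero]
  rw [real_inner_smul_left, real_inner_self_eq_norm_sq] at hyv
  have ht : 0 < t := pos_of_mul_pos_left (hyv ▸ one_pos) (sq_nonneg _)
  rw [infDist_eq_norm_sub_starProjection, norm_smul, Real.norm_of_nonneg ht.le, eq_div_iff]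
  · linear_combination hyv
  · intro hv
    rw [hv] at hyv
    simp at hyv

end Submodule

/-- ‖Y_k*‖ = 1 / dist(X_k, H_{1,k}) for the dual system Y_k* = P₁X_k*. -/
theorem stmt_8 (n : ℕ) (A : Matrix (Fin (n + 2)) (Fin (n + 2)) ℝ) (hA : IsUnit A.det)
    (X Xstar : Fin (n + 2) → EuclideanSpace ℝ (Fin (n + 2)))
    (hX : ∀ k, X k = fun i => A i k)
    (hXstar : ∀ k, Xstar k = fun i => A⁻¹ k i)
    (H₁ : Submodule ℝ (EuclideanSpace ℝ (Fin (n + 2))))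
    (hH₁ : H₁ = Submodule.span ℝ (X '' {i | i ≠ 0}))
    (Y : Fin (n + 2) → EuclideanSpace ℝ (Fin (n + 2)))
    (hY : ∀ k, Y k = (H₁.orthogonalProjectionOnto (Xstar k) : EuclideanSpace ℝ (Fin (n + 2)))) :
    ∀ k, k ≠ 0 →
      ‖Y k‖ = 1 / Metric.infDist (X k)
        (Submodule.span ℝ (X '' {i | i ≠ 0 ∧ i ≠ k}) :
          Set (EuclideanSpace ℝ (Fin (n + 2)))) := by
  intro k hk
  have biorth : ∀ j i, ⟪Xstar j, X i⟫ = if j = i then 1 else 0 := fun j i => by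
    rw [EuclideanSpace.inner_eq_star_dotProduct, hX, hXstar, ← Matrix.one_apply,
      ← Matrix.nonsing_inv_mul A hA, Matrix.mul_apply', dotProduct_comm]
    rfl
  have hYX : ∀ j ≠ 0, ⟪Y k, X j⟫ = if k = j then 1 else 0 := fun j hj => by
    rw [hY, ← biorth]
    exact H₁.inner_orthogonalProjectionOnto_eq_of_mem_right
      ⟨X j, hH₁ ▸ Submodule.subset_span ⟨j, hj, rfl⟩⟩ (Xstar k)
  have hsplit : H₁ = Submodule.span ℝ (X '' {i | i ≠ 0 ∧ i ≠ k}) ⊔ ℝ ∙ X k := by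
    rw [hH₁, ← Set.image_singleton, ← Submodule.span_union, ← Set.image_union]
    congr 2
    ext i
    by_cases hik : i = k <;> simp [hik, hk]
  refine Submodule.norm_eq_one_div_infDist_of_inner_eq_one ?_ ?_ (by simpa using hYX k hk)
  · rw [← hsplit, hY]
    exact Submodule.coe_mem _
  · refine Submodule.mem_orthogonal_span_of_forall_inner_eq_zero ?_
    rintro _ ⟨j, ⟨hj, hjk⟩, rfl⟩
    rw [real_inner_comm, hYX j hj, if_neg (Ne.symm hjk)]
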